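/- Let z > 0 be real and n ≥ 1 an integer. Then the derivative of ν ↦ J_ν(z) at ν = −n equals (log(z/2) + γ)·J_{−n}(z) − (z/2)^{−n} · [ (−1)^n · ∑_{m=0}^{n−1} ((z²/4)^m/m!)·(n−m−1)! + ∑_{m=n}^∞ ((−z²/4)^m/(m!·(m−n)!))·H_{m−n} ], where γ is the Euler–Mascheroni constant and H_m = ∑_{j=1}^m 1/j (with H_0 = 0). -/

import Mathlib

open scoped BigOperators

/-- The reciprocal of the complex Gamma function, an entire function
(Mathlib's `Complex.Gamma` vanishes at nonpositive integers, so the inverse is `0` there). -/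
noncomputable def Grec (t : ℂ) : ℂ := (Complex.Gamma t)⁻¹

/-- `G k t` is the `k`-th derivative of the reciprocal Gamma function at `t`. -/
noncomputable def G (k : ℕ) (t : ℂ) : ℂ := iteratedDeriv k Grec t

/-- The Maclaurin coefficients of `1/Γ`: `c j = G^{(j)}(0)/j!`. -/
noncomputable def mcCoeff (j : ℕ) : ℂ := iteratedDeriv j Grec 0 / (j.factorial : ℂ)

/-- Bessel function of the first kind `J_ν(z)` for real `z > 0` and complex order `ν`,
with `(z/2)^ν = exp (ν log (z/2))`. -/
noncomputable def besselJ (z : ℝ) (ν : ℂ) : ℂ :=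
  Complex.exp (ν * Complex.log ((z : ℂ) / 2)) *
    ∑' m : ℕ, (-(z : ℂ) ^ 2 / 4) ^ m / ((m.factorial : ℂ) * Complex.Gamma (ν + 1 + m))

/-- Pochhammer symbol `(t)_m = t (t+1) ⋯ (t+m-1)`. -/
noncomputable def poch (t : ℂ) (m : ℕ) : ℂ := ∏ i ∈ Finset.range m, (t + i)

/-- `P m k t = (1/k!) dᵏ/dtᵏ (t)_m`. -/
noncomputable def P (m k : ℕ) (t : ℂ) : ℂ :=
  ((k.factorial : ℂ))⁻¹ * iteratedDeriv k (fun s => poch s m) t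

/-- `Q m k t = (1/k!) dᵏ/dtᵏ (1/(t)_m)`. -/
noncomputable def Q (m k : ℕ) (t : ℂ) : ℂ :=
  ((k.factorial : ℂ))⁻¹ * iteratedDeriv k (fun s => (poch s m)⁻¹) t

/-- Signed Stirling numbers of the first kind: `s(n,k)` is the coefficient of `x^k`
in `x(x-1)⋯(x-n+1)`. -/
noncomputable def stirS (n k : ℕ) : ℤ := (descPochhammer ℤ n).coeff k

/-- Modified generalized harmonic numbers `Ĥ_m^{(k)}`. -/
noncomputable def Hhat (m k : ℕ) : ℝ :=
  if m = 0 then (if k = 0 then 1 else 0)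
  else ∑ j ∈ Finset.Icc 1 m, (-1 : ℝ) ^ (j - 1) * (m.choose j) / (j : ℝ) ^ k

/-- Digamma function `ψ = Γ'/Γ`. -/
noncomputable def digamma (t : ℂ) : ℂ := deriv Complex.Gamma t / Complex.Gamma t
/-!
Write `J_ν(z) = (z/2)^ν S(ν)` with `S(ν) = ∑ₘ (-z²/4)ᵐ/m! · (1/Γ)(ν+1+m)`. The terms of `S` are
entire and, on a disc of radius `1/2`, bounded by `B (2‖z²/4‖)ᵐ/m!`: after finitely many terms the
argument of `1/Γ` has real part `≥ 1/2`, where `(1/Γ)(v+k) = (1/Γ)(v)/(v)ₖ` and `|(v)ₖ| ≥ 2⁻ᵏ`.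
So `S` is entire and may be differentiated termwise. At `ν = -n` the first `n` terms of `S` vanish,
and the derivatives of `1/Γ` are `(-1)ᵏ k!` at `-k` and `(γ - Hₖ)/k!` at `k+1`.
-/

open Complex Metric Finset
open scoped Nat

@[fun_prop]
lemma differentiable_Grec : Differentiable ℂ Grec := differentiable_one_div_Gamma

lemma Grec_eq_poch_mul (t : ℂ) (m : ℕ) : Grec t = poch t m * Grec (t + m) := by
  induction m with
  | zero => simp [poch]
  | succ m ih =>
    rw [ih, show Grec (t + m) = (t + m) * Grec (t + m + 1) from
      one_div_Gamma_eq_self_mul_one_div_Gamma_add_one _, poch, poch, prod_range_succ]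
    push_cast
    ring_nf

lemma Grec_nat_add_one (m : ℕ) : Grec (m + 1) = (m ! : ℂ)⁻¹ := by
  rw [Grec, Gamma_nat_eq_factorial]

lemma Grec_neg_nat (k : ℕ) : Grec (-k) = 0 := by
  rw [Grec, Gamma_neg_nat_eq_zero, inv_zero]

lemma poch_neg_nat (k : ℕ) : poch (-k) k = (-1) ^ k * k ! := by
  induction k with
  | zero => simp [poch]
  | succ k ih =>
    unfold poch at ih ⊢
    rw [prod_range_succ']
    push_cast
    have hshift : ∀ i ∈ range k, -((k : ℂ) + 1) + ((i : ℂ) + 1) = -k + i := by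
      intro i _; ring
    rw [prod_congr rfl hshift, ih, Nat.factorial_succ]
    push_cast
    ring

lemma hasDerivAt_Grec_neg_nat (k : ℕ) : HasDerivAt Grec ((-1) ^ k * k !) (-k) := by
  -- `1/Γ` has a simple zero at `-k`, coming from the factor `t + k` of `(t)ₖ₊₁`
  have hfactor : Grec = fun t => (poch t k * Grec (t + k + 1)) * (t + k) := by
    funext t
    rw [Grec_eq_poch_mul t (k + 1), poch, prod_range_succ, ← poch]
    push_cast
    ring_nf
  have hcofactor : DifferentiableAt ℂ (fun t => poch t k * Grec (t + k + 1)) (-k) := by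
    unfold poch
    fun_prop
  rw [hfactor]
  have hlinear : HasDerivAt (fun t : ℂ => t + k) 1 (-k) := (hasDerivAt_id _).add_const _
  refine (hcofactor.hasDerivAt.fun_mul hlinear).congr_deriv ?_
  have hGrec_one : Grec 1 = 1 := by simpa using Grec_nat_add_one 0
  simp [poch_neg_nat, hGrec_one]

lemma hasDerivAt_Grec_nat_add_one (m : ℕ) :
    HasDerivAt Grec ((Real.eulerMascheroniConstant - harmonic m) / m !) (m + 1) := by
  have hΓ : Gamma (m + 1) ≠ 0 := by
    rw [Gamma_nat_eq_factorial]
    exact_mod_cast m.factorial_ne_zero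
  refine ((hasDerivAt_Gamma_nat m).inv hΓ).congr_deriv ?_
  rw [Gamma_nat_eq_factorial]
  field_simp
  ring

lemma norm_Grec_add_nat_le {v : ℂ} (hv : 1 / 2 ≤ v.re) (m : ℕ) :
    ‖Grec (v + m)‖ ≤ 2 ^ m * ‖Grec v‖ := by
  have hpoch : (1 / 2 : ℝ) ^ m ≤ ‖poch v m‖ := by
    rw [poch, norm_prod, show (1 / 2 : ℝ) ^ m = ∏ _i ∈ range m, (1 / 2 : ℝ) by simp]
    refine prod_le_prod (fun _ _ => by norm_num) fun i _ => ?_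
    calc (1 / 2 : ℝ) ≤ (v + i).re := by
          simp only [add_re, natCast_re]; linarith [i.cast_nonneg (α := ℝ)]
      _ ≤ ‖v + i‖ := re_le_norm _
  have hshift : ‖Grec v‖ = ‖poch v m‖ * ‖Grec (v + m)‖ := by rw [Grec_eq_poch_mul v m, norm_mul]
  have h2m : (2 : ℝ) ^ m * (1 / 2) ^ m = 1 := by rw [← mul_pow]; norm_num
  calc ‖Grec (v + m)‖ = 2 ^ m * ((1 / 2) ^ m * ‖Grec (v + m)‖) := by
        rw [← mul_assoc, h2m, one_mul]
    _ ≤ 2 ^ m * ‖Grec v‖ := by rw [hshift]; gcongr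

lemma exists_norm_Grec_add_nat_le (ν₀ : ℂ) :
    ∃ B, ∀ ν ∈ ball ν₀ (1 / 2), ∀ m : ℕ, ‖Grec (ν + 1 + m)‖ ≤ B * 2 ^ m := by
  obtain ⟨N, hN⟩ := exists_nat_ge (-ν₀.re)
  obtain ⟨B₁, hB₁⟩ := (isCompact_closedBall ν₀ (N + 2)).exists_bound_of_continuousOn
    differentiable_Grec.continuous.continuousOn
  obtain ⟨B₂, hB₂⟩ := (isCompact_closedBall (ν₀ + 1 + N) (1 / 2)).exists_bound_of_continuousOn
    differentiable_Grec.continuous.continuousOn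
  have hB₁0 : 0 ≤ B₁ := (norm_nonneg _).trans (hB₁ ν₀ (mem_closedBall_self (by positivity)))
  refine ⟨max B₁ B₂, fun ν hν m => ?_⟩
  rw [mem_ball, dist_eq_norm] at hν
  rcases lt_or_ge m N with hm | hm
  · have hmem : ν + 1 + m ∈ closedBall ν₀ (N + 2) := by
      rw [mem_closedBall, dist_eq_norm]
      calc ‖ν + 1 + m - ν₀‖ ≤ ‖ν - ν₀‖ + ‖(1 : ℂ)‖ + ‖(m : ℂ)‖ := by
            rw [show ν + 1 + m - ν₀ = ν - ν₀ + 1 + m by ring]; exact norm_add₃_le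
        _ ≤ N + 2 := by
            rw [norm_one, norm_natCast]
            linarith [(Nat.cast_le (α := ℝ)).mpr hm.le]
    calc ‖Grec (ν + 1 + m)‖ ≤ max B₁ B₂ := (hB₁ _ hmem).trans (le_max_left _ _)
      _ ≤ max B₁ B₂ * 2 ^ m :=
        le_mul_of_one_le_right (hB₁0.trans (le_max_left _ _)) (one_le_pow₀ (by norm_num))
  · obtain ⟨k, rfl⟩ := Nat.exists_eq_add_of_le hm
    have hmem : ν + 1 + N ∈ closedBall (ν₀ + 1 + N) (1 / 2) := by
      rw [mem_closedBall, dist_eq_norm, show ν + 1 + N - (ν₀ + 1 + N) = ν - ν₀ by ring]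
      exact hν.le
    have hre : 1 / 2 ≤ (ν + 1 + N).re := by
      have := neg_le_of_abs_le ((abs_re_le_norm (ν - ν₀)).trans hν.le)
      simp only [add_re, sub_re, one_re, natCast_re] at this ⊢
      linarith
    calc ‖Grec (ν + 1 + (N + k : ℕ))‖ = ‖Grec (ν + 1 + N + k)‖ := by push_cast; ring_nf
      _ ≤ 2 ^ k * B₂ := (norm_Grec_add_nat_le hre k).trans (by gcongr; exact hB₂ _ hmem)
      _ ≤ max B₁ B₂ * (2 ^ N * 2 ^ k) := by
        rw [mul_comm]
        exact mul_le_mul (le_max_right _ _) (le_mul_of_one_le_left (by positivity)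
          (one_le_pow₀ (by norm_num))) (by positivity) (hB₁0.trans (le_max_left _ _))
      _ = max B₁ B₂ * 2 ^ (N + k) := by rw [pow_add]

noncomputable def besselTerm (c : ℂ) (m : ℕ) (ν : ℂ) : ℂ := c ^ m / m ! * Grec (ν + 1 + m)

lemma besselJ_eq_exp_mul_tsum_besselTerm (z : ℝ) (ν : ℂ) :
    besselJ z ν = exp (ν * log (z / 2)) * ∑' m, besselTerm (-(z : ℂ) ^ 2 / 4) m ν := by
  simp only [besselJ, besselTerm, Grec, div_eq_mul_inv, mul_inv, mul_assoc]

lemma hasDerivAt_besselTerm (c : ℂ) (m : ℕ) (ν : ℂ) :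
    HasDerivAt (besselTerm c m) (c ^ m / m ! * deriv Grec (ν + 1 + m)) ν := by
  have hshift : HasDerivAt (fun ν : ℂ => ν + 1 + m) 1 ν :=
    ((hasDerivAt_id ν).add_const 1).add_const _
  have h := ((differentiable_Grec _).hasDerivAt.comp ν hshift).const_mul (c ^ m / m !)
  rw [mul_one] at h
  exact h

lemma exists_summable_bound_besselTerm (c ν₀ : ℂ) :
    ∃ u : ℕ → ℝ, Summable u ∧ ∀ m, ∀ ν ∈ ball ν₀ (1 / 2), ‖besselTerm c m ν‖ ≤ u m := by
  obtain ⟨B, hB⟩ := exists_norm_Grec_add_nat_le ν₀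
  refine ⟨fun m => B * ((2 * ‖c‖) ^ m / m !), (Real.summable_pow_div_factorial _).mul_left B,
    fun m ν hν => ?_⟩
  calc ‖besselTerm c m ν‖ = ‖c‖ ^ m / m ! * ‖Grec (ν + 1 + m)‖ := by
        rw [besselTerm, norm_mul, norm_div, norm_pow, norm_natCast]
    _ ≤ ‖c‖ ^ m / m ! * (B * 2 ^ m) := by gcongr; exact hB ν hν m
    _ = B * ((2 * ‖c‖) ^ m / m !) := by ring

lemma summable_besselTerm (c ν : ℂ) : Summable fun m => besselTerm c m ν := by
  obtain ⟨u, hu, hbound⟩ := exists_summable_bound_besselTerm c ν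
  exact hu.of_norm_bounded fun m => hbound m ν (mem_ball_self (by norm_num))

lemma differentiable_tsum_besselTerm (c : ℂ) :
    Differentiable ℂ fun ν => ∑' m, besselTerm c m ν := fun ν₀ => by
  obtain ⟨u, hu, hbound⟩ := exists_summable_bound_besselTerm c ν₀
  exact (differentiableOn_tsum_of_summable_norm hu
    (fun m ν _ => (hasDerivAt_besselTerm c m ν).differentiableAt.differentiableWithinAt)
    isOpen_ball hbound).differentiableAt (isOpen_ball.mem_nhds (mem_ball_self (by norm_num)))

lemma hasSum_deriv_besselTerm (c ν₀ : ℂ) :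
    HasSum (fun m => c ^ m / m ! * deriv Grec (ν₀ + 1 + m))
      (deriv (fun ν => ∑' m, besselTerm c m ν) ν₀) := by
  obtain ⟨u, hu, hbound⟩ := exists_summable_bound_besselTerm c ν₀
  have := hasSum_deriv_of_summable_norm hu
    (fun m ν _ => (hasDerivAt_besselTerm c m ν).differentiableAt.differentiableWithinAt)
    isOpen_ball hbound (mem_ball_self (by norm_num))
  simpa only [(hasDerivAt_besselTerm c _ ν₀).deriv] using this

lemma besselTerm_neg_nat_of_lt (c : ℂ) {m n : ℕ} (h : m < n) : besselTerm c m (-n) = 0 := by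
  obtain ⟨k, rfl⟩ : ∃ k, n = m + k + 1 := ⟨n - m - 1, by omega⟩
  rw [besselTerm, show -((m + k + 1 : ℕ) : ℂ) + 1 + m = -k by push_cast; ring, Grec_neg_nat,
    mul_zero]

lemma besselTerm_add_neg_nat (c : ℂ) (k n : ℕ) :
    besselTerm c (k + n) (-n) = c ^ (k + n) / ((k + n)! * k !) := by
  rw [besselTerm, show -(n : ℂ) + 1 + (k + n : ℕ) = k + 1 by push_cast; ring, Grec_nat_add_one]
  ring

lemma tsum_besselTerm_neg_nat (c : ℂ) (n : ℕ) :
    ∑' m, besselTerm c m (-n) = ∑' k, c ^ (k + n) / ((k + n)! * k !) := by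
  rw [← (summable_besselTerm c _).sum_add_tsum_nat_add n,
    sum_eq_zero fun m hm => besselTerm_neg_nat_of_lt c (mem_range.mp hm), zero_add]
  exact tsum_congr fun k => besselTerm_add_neg_nat c k n

lemma deriv_tsum_besselTerm_neg_nat (c : ℂ) (n : ℕ) :
    deriv (fun ν => ∑' m, besselTerm c m ν) (-n) =
      ∑ m ∈ range n, c ^ m / m ! * ((-1) ^ (n - m - 1) * (n - m - 1)!) +
        (Real.eulerMascheroniConstant * ∑' k, c ^ (k + n) / ((k + n)! * k !) -
          ∑' k, c ^ (k + n) / ((k + n)! * k !) * harmonic k) := by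
  set γ : ℂ := (Real.eulerMascheroniConstant : ℂ)
  set a : ℕ → ℂ := fun k => c ^ (k + n) / ((k + n)! * k !)
  have hD := hasSum_deriv_besselTerm c (-n)
  have hhead : ∀ m ∈ range n, c ^ m / m ! * deriv Grec (-n + 1 + m) =
      c ^ m / m ! * ((-1) ^ (n - m - 1) * (n - m - 1)!) := by
    intro m hm
    obtain ⟨k, rfl⟩ : ∃ k, n = m + k + 1 := ⟨n - m - 1, by have := mem_range.mp hm; omega⟩
    rw [show -((m + k + 1 : ℕ) : ℂ) + 1 + m = -k by push_cast; ring,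
      (hasDerivAt_Grec_neg_nat k).deriv, show m + k + 1 - m - 1 = k by omega]
  have htail : ∀ k : ℕ, c ^ (k + n) / (k + n : ℕ)! * deriv Grec (-n + 1 + (k + n : ℕ)) =
      γ * a k - a k * harmonic k := by
    intro k
    rw [show -(n : ℂ) + 1 + (k + n : ℕ) = k + 1 by push_cast; ring,
      (hasDerivAt_Grec_nat_add_one k).deriv]
    ring
  have ha : Summable a :=
    ((summable_nat_add_iff n).mpr (summable_besselTerm c (-n))).congr (besselTerm_add_neg_nat c · n)
  have hγaH : Summable fun k => γ * a k - a k * harmonic k :=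
    ((summable_nat_add_iff n).mpr hD.summable).congr htail
  have haH : Summable fun k => a k * harmonic k := by
    simpa using (ha.mul_left γ).sub hγaH
  rw [← hD.tsum_eq, ← hD.summable.sum_add_tsum_nat_add n, sum_congr rfl hhead, tsum_congr htail,
    (ha.mul_left γ).tsum_sub haH, tsum_mul_left]

theorem deriv_besselJ_neg_nat_general (z : ℝ) (n : ℕ) :
    deriv (fun ν => besselJ z ν) (-(n : ℂ)) =
      (Complex.log ((z : ℂ) / 2) + (Real.eulerMascheroniConstant : ℂ)) * besselJ z (-(n : ℂ)) -
        Complex.exp (-(n : ℂ) * Complex.log ((z : ℂ) / 2)) *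
          ((-1) ^ n * ∑ m ∈ Finset.range n,
              ((z : ℂ) ^ 2 / 4) ^ m / (m.factorial : ℂ) * ((n - m - 1).factorial : ℂ) +
            ∑' m : ℕ, (-(z : ℂ) ^ 2 / 4) ^ (m + n) /
              (((m + n).factorial : ℂ) * (m.factorial : ℂ)) *
                ∑ j ∈ Finset.Icc 1 m, (1 : ℂ) / (j : ℂ)) := by
  have hJ : (fun ν => besselJ z ν) =
      fun ν => exp (ν * log (z / 2)) * ∑' m, besselTerm (-(z : ℂ) ^ 2 / 4) m ν :=
    funext (besselJ_eq_exp_mul_tsum_besselTerm z)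
  have hexp : HasDerivAt (fun ν => exp (ν * log (z / 2)))
      (exp (-n * log (z / 2)) * log (z / 2)) (-n) :=
    ((hasDerivAt_id _).mul_const _).cexp.congr_deriv (by simp)
  have hhead : ∑ m ∈ range n, (-(z : ℂ) ^ 2 / 4) ^ m / m ! * ((-1) ^ (n - m - 1) * (n - m - 1)!) =
      -((-1) ^ n * ∑ m ∈ range n, ((z : ℂ) ^ 2 / 4) ^ m / m ! * (n - m - 1)!) := by
    rw [mul_sum, ← sum_neg_distrib]
    refine sum_congr rfl fun m hm => ?_
    obtain ⟨k, rfl⟩ : ∃ k, n = m + k + 1 := ⟨n - m - 1, by have := mem_range.mp hm; omega⟩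
    rw [show m + k + 1 - m - 1 = k by omega, show -(z : ℂ) ^ 2 / 4 = -1 * ((z : ℂ) ^ 2 / 4) by ring,
      mul_pow]
    ring
  have hharmonic : ∀ k, (harmonic k : ℂ) = ∑ j ∈ Icc 1 k, (1 : ℂ) / j := by
    intro k
    simp [harmonic_eq_sum_Icc]
  rw [hJ, (hexp.fun_mul (differentiable_tsum_besselTerm _ _).hasDerivAt).deriv,
    besselJ_eq_exp_mul_tsum_besselTerm,
    deriv_tsum_besselTerm_neg_nat, tsum_besselTerm_neg_nat, hhead]
  simp only [hharmonic]
  ring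

/-- First derivative at a negative integer order `ν = −n`, `n ≥ 1`:
`∂/∂ν J_ν(z)|_{ν=−n} = (log(z/2) + γ) J_{−n}(z) − (z/2)^{−n} [(−1)ⁿ ∑_{m<n} (z²/4)ᵐ/m! (n−m−1)!
+ ∑_{m≥n} (−z²/4)ᵐ/(m!(m−n)!) H_{m−n}]` (the infinite series reindexed by `m ↦ m + n`). -/
theorem deriv_besselJ_neg_nat (z : ℝ) (hz : 0 < z) (n : ℕ) (hn : 1 ≤ n) :
    deriv (fun ν => besselJ z ν) (-(n : ℂ)) =
      (Complex.log ((z : ℂ) / 2) + (Real.eulerMascheroniConstant : ℂ)) * besselJ z (-(n : ℂ)) -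
        Complex.exp (-(n : ℂ) * Complex.log ((z : ℂ) / 2)) *
          ((-1) ^ n * ∑ m ∈ Finset.range n,
              ((z : ℂ) ^ 2 / 4) ^ m / (m.factorial : ℂ) * ((n - m - 1).factorial : ℂ) +
            ∑' m : ℕ, (-(z : ℂ) ^ 2 / 4) ^ (m + n) /
              (((m + n).factorial : ℂ) * (m.factorial : ℂ)) *
                ∑ j ∈ Finset.Icc 1 m, (1 : ℂ) / (j : ℂ)) :=
  deriv_besselJ_neg_nat_general z n
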